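/- arXiv:2503.13849 — 6 statements merged into one kernel-verified Lean document; each statement's English description precedes it below -/
import Mathlib

section
/- Let f : ℝⁿ → ℝⁿ be a super-linearizable polynomial vector field and let φ : ℝⁿ → ℝⁿ be a tame automorphism with inverse φ⁻¹. Then the transformed polynomial vector field h(y) = Dφ(φ⁻¹(y)) · f(φ⁻¹(y)) (the dynamics of y = φ(x) when ẋ = f(x)) is super-linearizable. -/
open Matrix MvPolynomial

/-- A map between finite-dimensional real coordinate spaces is polynomial if each
component is given by a real multivariate polynomial. -/
def IsPolyMap {n m : ℕ} (f : (Fin n → ℝ) → (Fin m → ℝ)) : Prop :=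
  ∃ P : Fin m → MvPolynomial (Fin n) ℝ, ∀ x i, f x i = MvPolynomial.eval x (P i)

/-- A vector field `f : ℝⁿ → ℝⁿ` is super-linearizable if there are `k ∈ ℕ`, a matrix
`A ∈ ℝ^{(n+k)×(n+k)}` and a polynomial map `p : ℝⁿ → ℝᵏ` such that every solution of
`ẋ = f(x)` starting at `x₀` is, for `t ≥ 0`, the projection on the first `n` coordinates
of `t ↦ exp(tA)·(x₀, p(x₀))`. -/
def IsSuperLinearizable {n : ℕ} (f : (Fin n → ℝ) → (Fin n → ℝ)) : Prop :=
  ∃ (k : ℕ) (A : Matrix (Fin (n + k)) (Fin (n + k)) ℝ)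
    (p : (Fin n → ℝ) → (Fin k → ℝ)), IsPolyMap p ∧
    ∀ (x₀ : Fin n → ℝ) (x : ℝ → (Fin n → ℝ)),
      x 0 = x₀ →
      (∀ t : ℝ, 0 ≤ t → HasDerivAt x (f (x t)) t) →
      ∀ t : ℝ, 0 ≤ t → ∀ i : Fin n,
        (NormedSpace.exp (t • A)).mulVec (Fin.append x₀ (p x₀)) (Fin.castAdd k i) = x t i

/-- An elementary transformation of `ℝⁿ`: it adds to the last coordinate a polynomial `g`
of degree greater than `1` depending only on the first `n-1` coordinates. -/
def IsElementaryMap {n : ℕ} (φ : (Fin n → ℝ) → (Fin n → ℝ)) : Prop :=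
  ∃ g : MvPolynomial (Fin n) ℝ, 1 < g.totalDegree ∧
    (∀ i : Fin n, (i : ℕ) + 1 = n → i ∉ g.vars) ∧
    ∀ x j, φ x j = if (j : ℕ) + 1 = n then x j + MvPolynomial.eval x g else x j

/-- An affine automorphism of `ℝⁿ`: `x ↦ Ax + b` with `A` invertible. -/
def IsAffineAut {n : ℕ} (φ : (Fin n → ℝ) → (Fin n → ℝ)) : Prop :=
  ∃ (A : Matrix (Fin n) (Fin n) ℝ) (b : Fin n → ℝ), IsUnit A.det ∧
    ∀ x, φ x = A.mulVec x + b

/-- A tame automorphism: a finite composition of affine and elementary transformations. -/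
def IsTame {n : ℕ} (φ : (Fin n → ℝ) → (Fin n → ℝ)) : Prop :=
  ∃ L : List ((Fin n → ℝ) → (Fin n → ℝ)),
    (∀ ψ ∈ L, IsAffineAut ψ ∨ IsElementaryMap ψ) ∧ φ = L.foldr (· ∘ ·) id

/-!
Pull a solution `y` of `ẏ = h(y)` back to the solution `x = φ⁻¹ ∘ y` of `ẋ = f(x)`. Its lift
`z(t) = exp(tM)·(x₀, p(x₀))` is a linear flow, hence so is `(z, 1)`, and so is the tensor power
`(z, 1)^{⊗d}`, whose generator is a Kronecker sum. Once `d` bounds the degree of `φ`, every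
coordinate of `φ(x) = φ(π z)` is a fixed linear combination of the coordinates of `(z, 1)^{⊗d}`.
Appending these combinations to `(z, 1)^{⊗d}` gives a linear flow whose first `n` coordinates are
`y = φ(x)`; it starts at a polynomial function of `y₀` because a tame automorphism has a
polynomial inverse.
-/

section LinearFlow

variable {ι κ : Type*} [Fintype ι] [Fintype κ]

def IsLinearFlow (A : Matrix ι ι ℝ) (v : ℝ → ι → ℝ) : Prop :=
  ∀ t, HasDerivAt v (A *ᵥ v t) t

theorem isLinearFlow_exp [DecidableEq ι] (A : Matrix ι ι ℝ) (c : ι → ℝ) :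
    IsLinearFlow A fun t => NormedSpace.exp (t • A) *ᵥ c := by
  let : NormedRing (Matrix ι ι ℝ) := Matrix.linftyOpNormedRing
  let : NormedAlgebra ℝ (Matrix ι ι ℝ) := Matrix.linftyOpNormedAlgebra
  intro t
  let applyTo : Matrix ι ι ℝ →ₗ[ℝ] ι → ℝ := (LinearMap.applyₗ c).comp Matrix.toLin'.toLinearMap
  show HasDerivAt _ (A *ᵥ (NormedSpace.exp (t • A) *ᵥ c)) t
  rw [Matrix.mulVec_mulVec]
  exact applyTo.toContinuousLinearMap.hasFDerivAt.comp_hasDerivAt t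
    (hasDerivAt_exp_smul_const' A t)

theorem IsLinearFlow.eq_exp [DecidableEq ι] {A : Matrix ι ι ℝ} {v : ℝ → ι → ℝ}
    (hv : IsLinearFlow A v) (t : ℝ) : v t = NormedSpace.exp (t • A) *ᵥ v 0 := by
  have hlip := (Matrix.toLin' A).toContinuousLinearMap.lipschitz
  have huniq := ODE_solution_unique_univ (v := fun _ => (A *ᵥ ·)) (s := fun _ => Set.univ)
    (t₀ := 0) (fun _ => hlip.lipschitzOnWith) (fun t => ⟨hv t, trivial⟩)
    (fun t => ⟨isLinearFlow_exp A (v 0) t, trivial⟩) (by simp)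
  exact congrFun huniq t

theorem isLinearFlow_const (c : ι → ℝ) : IsLinearFlow (0 : Matrix ι ι ℝ) fun _ => c := by
  intro t
  simpa using hasDerivAt_const t c

theorem IsLinearFlow.sumElim {A : Matrix ι ι ℝ} {B : Matrix κ κ ℝ} {v : ℝ → ι → ℝ}
    {w : ℝ → κ → ℝ} (hv : IsLinearFlow A v) (hw : IsLinearFlow B w) :
    IsLinearFlow (Matrix.fromBlocks A 0 0 B) fun t => Sum.elim (v t) (w t) := by
  intro t
  rw [hasDerivAt_pi]
  rintro (i | j)
  · simpa [Matrix.fromBlocks_mulVec] using hasDerivAt_pi.mp (hv t) i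
  · simpa [Matrix.fromBlocks_mulVec] using hasDerivAt_pi.mp (hw t) j

theorem IsLinearFlow.sumElim_mulVec {A : Matrix ι ι ℝ} {v : ℝ → ι → ℝ} (hv : IsLinearFlow A v)
    (C : Matrix κ ι ℝ) :
    IsLinearFlow (Matrix.fromBlocks 0 (C * A) 0 A) fun t => Sum.elim (C *ᵥ v t) (v t) := by
  intro t
  rw [hasDerivAt_pi]
  rintro (i | j)
  · have hC := (Matrix.mulVecLin C).toContinuousLinearMap.hasFDerivAt.comp_hasDerivAt t (hv t)
    simpa [Matrix.fromBlocks_mulVec, Matrix.mulVec_mulVec] using hasDerivAt_pi.mp hC i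
  · simpa [Matrix.fromBlocks_mulVec] using hasDerivAt_pi.mp (hv t) j

theorem IsLinearFlow.reindex {A : Matrix ι ι ℝ} {v : ℝ → ι → ℝ} (hv : IsLinearFlow A v)
    (e : ι ≃ κ) : IsLinearFlow (Matrix.reindex e e A) fun t => v t ∘ e.symm := by
  intro t
  rw [hasDerivAt_pi]
  intro i
  simpa [Matrix.reindex_apply, Matrix.submatrix_mulVec_equiv, Function.comp_assoc] using
    hasDerivAt_pi.mp (hv t) (e.symm i)

end LinearFlow

section TensorPow

variable {ι : Type*}

def tensorPow (d : ℕ) (u : ι → ℝ) : (Fin d → ι) → ℝ := fun a => ∏ r, u (a r)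

/-- `∑ r, 1 ⊗ ⋯ ⊗ A ⊗ ⋯ ⊗ 1`, with `A` in the `r`-th of the `d` tensor factors. -/
def kroneckerSum [Fintype ι] [DecidableEq ι] (d : ℕ) (A : Matrix ι ι ℝ) :
    Matrix (Fin d → ι) (Fin d → ι) ℝ :=
  Matrix.of fun a b => ∑ r, ∑ j, if b = Function.update a r j then A (a r) j else 0

theorem tensorPow_update {d : ℕ} [DecidableEq ι] (u : ι → ℝ) (a : Fin d → ι) (r : Fin d)
    (j : ι) : tensorPow d u (Function.update a r j) = u j * ∏ s ∈ Finset.univ.erase r, u (a s) := by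
  rw [tensorPow, ← Finset.mul_prod_erase _ _ (Finset.mem_univ r), Function.update_self]
  congr 1
  refine Finset.prod_congr rfl fun s hs => ?_
  rw [Function.update_of_ne (Finset.ne_of_mem_erase hs)]

variable [Fintype ι] [DecidableEq ι]

theorem kroneckerSum_mulVec (d : ℕ) (A : Matrix ι ι ℝ) (w : (Fin d → ι) → ℝ) (a : Fin d → ι) :
    (kroneckerSum d A *ᵥ w) a = ∑ r, ∑ j, A (a r) j * w (Function.update a r j) := by
  simp only [Matrix.mulVec, dotProduct, kroneckerSum, Matrix.of_apply, Finset.sum_mul, ite_mul,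
    zero_mul]
  rw [Finset.sum_comm]
  refine Finset.sum_congr rfl fun r _ => ?_
  rw [Finset.sum_comm]
  simp

theorem IsLinearFlow.tensorPow {A : Matrix ι ι ℝ} {v : ℝ → ι → ℝ} (hv : IsLinearFlow A v)
    (d : ℕ) : IsLinearFlow (kroneckerSum d A) fun t => _root_.tensorPow d (v t) := by
  intro t
  rw [hasDerivAt_pi]
  intro a
  have hval : (kroneckerSum d A *ᵥ _root_.tensorPow d (v t)) a
      = ∑ r, (∏ s ∈ Finset.univ.erase r, v t (a s)) • (A *ᵥ v t) (a r) := by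
    rw [kroneckerSum_mulVec]
    refine Finset.sum_congr rfl fun r _ => ?_
    simp only [tensorPow_update, Matrix.mulVec, dotProduct, smul_eq_mul, Finset.mul_sum]
    exact Finset.sum_congr rfl fun j _ => by ring
  rw [hval]
  exact HasDerivAt.fun_finsetProd fun r _ => hasDerivAt_pi.mp (hv t) (a r)

end TensorPow

section MonomialSpan

variable (σ : Type*)

/-- The polynomial functions of degree `≤ d` on `σ → ℝ`, as the degree-`d` monomials in `x` and
an extra coordinate equal to `1`. -/
def monomialSpan (d : ℕ) : Submodule ℝ ((σ → ℝ) → ℝ) :=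
  Submodule.span ℝ
    (Set.range fun (a : Fin d → σ ⊕ Unit) (x : σ → ℝ) => tensorPow d (Sum.elim x 1) a)

variable {σ}

theorem const_mem_monomialSpan (c : ℝ) (d : ℕ) : (fun _ => c) ∈ monomialSpan σ d := by
  have : (fun _ : σ → ℝ => c) = c • fun x => tensorPow d (Sum.elim x 1) fun _ => Sum.inr () := by
    funext x
    simp [tensorPow]
  rw [this]
  exact Submodule.smul_mem _ _ (Submodule.subset_span ⟨_, rfl⟩)

theorem mul_coord_mem_monomialSpan {d : ℕ} {g : (σ → ℝ) → ℝ} (hg : g ∈ monomialSpan σ d)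
    (i : σ) : (fun x => g x * x i) ∈ monomialSpan σ (d + 1) := by
  induction hg using Submodule.span_induction with
  | mem g hg =>
    obtain ⟨a, rfl⟩ := hg
    exact Submodule.subset_span
      ⟨Fin.cons (Sum.inl i) a, by funext x; simp [tensorPow, Fin.prod_univ_succ, mul_comm]⟩
  | zero => convert (monomialSpan σ (d + 1)).zero_mem using 1; funext x; simp
  | add g g' _ _ hg hg' => convert add_mem hg hg' using 1; funext x; simp [add_mul]
  | smul c g _ hg => convert Submodule.smul_mem _ c hg using 1; funext x; simp [mul_assoc]

theorem monomialSpan_mono : Monotone (monomialSpan σ) := by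
  refine monotone_nat_of_le_succ fun d => Submodule.span_le.mpr ?_
  rintro _ ⟨a, rfl⟩
  exact Submodule.subset_span
    ⟨Fin.cons (Sum.inr ()) a, by funext x; simp [tensorPow, Fin.prod_univ_succ]⟩

theorem exists_eval_mem_monomialSpan (P : MvPolynomial σ ℝ) :
    ∃ d, (fun x => eval x P) ∈ monomialSpan σ d := by
  induction P using MvPolynomial.induction_on with
  | C c => exact ⟨0, by simpa using const_mem_monomialSpan c 0⟩
  | add P Q hP hQ =>
    obtain ⟨d, hd⟩ := hP
    obtain ⟨e, he⟩ := hQ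
    refine ⟨max d e, ?_⟩
    convert add_mem (monomialSpan_mono (le_max_left d e) hd)
      (monomialSpan_mono (le_max_right d e) he) using 1
    funext x
    simp
  | mul_X P i hP =>
    obtain ⟨d, hd⟩ := hP
    exact ⟨d + 1, by simpa using mul_coord_mem_monomialSpan hd i⟩

theorem exists_mulVec_tensorPow_eq_eval [Fintype σ] {m : Type*} [Finite m]
    (P : m → MvPolynomial σ ℝ) : ∃ (d : ℕ) (C : Matrix m (Fin d → σ ⊕ Unit) ℝ),
      ∀ x, C *ᵥ tensorPow d (Sum.elim x 1) = fun i => eval x (P i) := by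
  choose d hd using fun i => exists_eval_mem_monomialSpan (P i)
  obtain ⟨D, hD⟩ := Finite.exists_le d
  choose C hC using fun i =>
    (Submodule.mem_span_range_iff_exists_fun ℝ).mp (monomialSpan_mono (hD i) (hd i))
  refine ⟨D, Matrix.of C, fun x => funext fun i => ?_⟩
  simpa [Matrix.mulVec, dotProduct] using congrFun (hC i) x

end MonomialSpan

section PolyAut

variable {n m l : ℕ}

theorem IsPolyMap.differentiable {g : (Fin n → ℝ) → (Fin m → ℝ)} (hg : IsPolyMap g) :
    Differentiable ℝ g := by
  obtain ⟨P, hP⟩ := hg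
  rw [show g = fun x i => eval x (P i) from funext fun x => funext (hP x)]
  exact differentiable_pi.mpr fun i =>
    differentiableOn_univ.mp (AnalyticOnNhd.eval_mvPolynomial (P i)).differentiableOn

theorem isPolyMap_id : IsPolyMap (id : (Fin n → ℝ) → (Fin n → ℝ)) :=
  ⟨X, fun x i => by simp⟩

theorem IsPolyMap.comp {g : (Fin m → ℝ) → (Fin l → ℝ)} {g' : (Fin n → ℝ) → (Fin m → ℝ)}
    (hg : IsPolyMap g) (hg' : IsPolyMap g') : IsPolyMap (g ∘ g') := by
  obtain ⟨P, hP⟩ := hg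
  obtain ⟨Q, hQ⟩ := hg'
  refine ⟨fun i => bind₁ Q (P i), fun x i => ?_⟩
  rw [Function.comp_apply, hP, show g' x = fun j => eval x (Q j) from funext (hQ x)]
  exact (eval₂Hom_bind₁ (RingHom.id ℝ) x Q (P i)).symm

theorem isPolyMap_mulVec_add (A : Matrix (Fin m) (Fin n) ℝ) (b : Fin m → ℝ) :
    IsPolyMap fun x => A *ᵥ x + b :=
  ⟨fun i => ∑ j, C (A i j) * X j + C (b i), fun x i => by simp [Matrix.mulVec, dotProduct]⟩

def IsPolyAut (φ : (Fin n → ℝ) → (Fin n → ℝ)) : Prop :=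
  IsPolyMap φ ∧ ∃ ψ, IsPolyMap ψ ∧ Function.LeftInverse ψ φ ∧ Function.RightInverse ψ φ

theorem isPolyAut_id : IsPolyAut (id : (Fin n → ℝ) → (Fin n → ℝ)) :=
  ⟨isPolyMap_id, id, isPolyMap_id, fun _ => rfl, fun _ => rfl⟩

theorem IsPolyAut.comp {φ φ' : (Fin n → ℝ) → (Fin n → ℝ)} (hφ : IsPolyAut φ)
    (hφ' : IsPolyAut φ') : IsPolyAut (φ ∘ φ') := by
  obtain ⟨hφ, ψ, hψ, hl, hr⟩ := hφ
  obtain ⟨hφ', ψ', hψ', hl', hr'⟩ := hφ'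
  exact ⟨hφ.comp hφ', ψ' ∘ ψ, hψ'.comp hψ, hl.comp hl', hr.comp hr'⟩

theorem IsAffineAut.isPolyAut {φ : (Fin n → ℝ) → (Fin n → ℝ)} (hφ : IsAffineAut φ) :
    IsPolyAut φ := by
  obtain ⟨A, b, hA, hφ⟩ := hφ
  rw [show φ = fun x => A *ᵥ x + b from funext hφ]
  refine ⟨isPolyMap_mulVec_add A b, fun y => A⁻¹ *ᵥ y + -(A⁻¹ *ᵥ b),
    isPolyMap_mulVec_add _ _, fun x => ?_, fun y => ?_⟩
  · simp [Matrix.mulVec_add, Matrix.mulVec_mulVec, Matrix.nonsing_inv_mul A hA]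
  · simp [Matrix.mulVec_add, Matrix.mulVec_neg, Matrix.mulVec_mulVec, Matrix.mul_nonsing_inv A hA]

theorem IsElementaryMap.isPolyAut {φ : (Fin n → ℝ) → (Fin n → ℝ)} (hφ : IsElementaryMap φ) :
    IsPolyAut φ := by
  obtain ⟨g, -, hlast, hφ⟩ := hφ
  have heval (x y : Fin n → ℝ) :
      eval (fun j : Fin n => if (j : ℕ) + 1 = n then y j else x j) g = eval x g :=
    eval₂Hom_congr' rfl (fun i hi _ => if_neg fun h => hlast i h hi) rfl
  refine ⟨⟨fun j => if (j : ℕ) + 1 = n then X j + g else X j, fun x j => ?_⟩,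
    fun y j => if (j : ℕ) + 1 = n then y j - eval y g else y j,
    ⟨fun j => if (j : ℕ) + 1 = n then X j - g else X j, fun y j => ?_⟩, fun x => ?_, fun y => ?_⟩
  · by_cases hj : (j : ℕ) + 1 = n <;> simp [hφ, hj]
  · by_cases hj : (j : ℕ) + 1 = n <;> simp [hj]
  · have hgφ : eval (φ x) g = eval x g := by
      rw [show φ x = _ from funext (hφ x)]
      exact heval x _
    funext j
    simp only [hgφ, hφ]
    split_ifs <;> ring
  · have hgψ : eval (fun j : Fin n => if (j : ℕ) + 1 = n then y j - eval y g else y j) g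
        = eval y g := heval y _
    funext j
    simp only [hφ, hgψ]
    split_ifs <;> ring

theorem IsTame.isPolyAut {φ : (Fin n → ℝ) → (Fin n → ℝ)} (hφ : IsTame φ) : IsPolyAut φ := by
  obtain ⟨L, hL, rfl⟩ := hφ
  induction L with
  | nil => exact isPolyAut_id
  | cons θ L ih =>
    have hθ := (hL θ List.mem_cons_self).elim IsAffineAut.isPolyAut IsElementaryMap.isPolyAut
    exact hθ.comp (ih fun ψ hψ => hL ψ (List.mem_cons_of_mem θ hψ))

end PolyAut

section Conjugation

variable {n m : ℕ}

theorem IsPolyMap.append {k : ℕ} {g : (Fin n → ℝ) → Fin m → ℝ} {g' : (Fin n → ℝ) → Fin k → ℝ}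
    (hg : IsPolyMap g) (hg' : IsPolyMap g') : IsPolyMap fun x => Fin.append (g x) (g' x) := by
  obtain ⟨P, hP⟩ := hg
  obtain ⟨P', hP'⟩ := hg'
  refine ⟨Fin.append P P', fun x i => ?_⟩
  refine Fin.addCases (fun i => ?_) (fun i => ?_) i <;> simp [hP, hP']

theorem IsPolyMap.exists_tensorPow_sumElim_one {g : (Fin n → ℝ) → Fin m → ℝ} (hg : IsPolyMap g)
    (d : ℕ) : ∃ P : (Fin d → Fin m ⊕ Unit) → MvPolynomial (Fin n) ℝ,
      ∀ x a, tensorPow d (Sum.elim (g x) 1) a = eval x (P a) := by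
  obtain ⟨G, hG⟩ := hg
  refine ⟨fun a => ∏ r, Sum.elim G 1 (a r), fun x a => ?_⟩
  rw [tensorPow, map_prod]
  refine Finset.prod_congr rfl fun r _ => ?_
  rcases a r with i | _ <;> simp [hG]

theorem HasDerivAt.comp_of_conj {E : Type*} [NormedAddCommGroup E] [NormedSpace ℝ E]
    {f φ φinv : E → E} (hφ : Differentiable ℝ φ) (hφinv : Differentiable ℝ φinv)
    (hinv : Function.LeftInverse φinv φ) (hinv' : Function.RightInverse φinv φ) {y : ℝ → E}
    {t : ℝ} (hy : HasDerivAt y (fderiv ℝ φ (φinv (y t)) (f (φinv (y t)))) t) :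
    HasDerivAt (φinv ∘ y) (f (φinv (y t))) t := by
  have hid :
      (fderiv ℝ φinv (y t)).comp (fderiv ℝ φ (φinv (y t))) = ContinuousLinearMap.id ℝ E := by
    have hchain := fderiv_comp (φinv (y t)) (hφinv (φ (φinv (y t)))) (hφ (φinv (y t)))
    rwa [hinv.id, fderiv_id, hinv' (y t), eq_comm] at hchain
  simpa [← ContinuousLinearMap.comp_apply, hid] using
    (hφinv (y t)).hasFDerivAt.comp_hasDerivAt t hy

theorem IsSuperLinearizable.of_linearFlow_lift {h : (Fin n → ℝ) → (Fin n → ℝ)}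
    {κ : Type*} [Fintype κ] (B : Matrix (Fin n ⊕ κ) (Fin n ⊕ κ) ℝ) (q : (Fin n → ℝ) → κ → ℝ)
    (hq : ∃ Q : κ → MvPolynomial (Fin n) ℝ, ∀ y b, q y b = eval y (Q b))
    (hlift : ∀ y : ℝ → Fin n → ℝ, (∀ t, 0 ≤ t → HasDerivAt y (h (y t)) t) →
      ∃ v : ℝ → Fin n ⊕ κ → ℝ, IsLinearFlow B v ∧ v 0 = Sum.elim (y 0) (q (y 0)) ∧
        ∀ t, 0 ≤ t → ∀ i, v t (Sum.inl i) = y t i) :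
    IsSuperLinearizable h := by
  let eκ := Fintype.equivFin κ
  let e : Fin n ⊕ κ ≃ Fin (n + Fintype.card κ) :=
    (Equiv.sumCongr (Equiv.refl _) eκ).trans finSumFinEquiv
  obtain ⟨Q, hQ⟩ := hq
  refine ⟨Fintype.card κ, Matrix.reindex e e B, fun y => q y ∘ eκ.symm,
    ⟨Q ∘ eκ.symm, fun y b => hQ _ _⟩, ?_⟩
  rintro _ y rfl hy t ht i
  obtain ⟨v, hv, hv0, hvy⟩ := hlift y hy
  have hinit : Fin.append (y 0) (q (y 0) ∘ eκ.symm) = v 0 ∘ e.symm := by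
    rw [hv0]
    funext j
    refine Fin.addCases (fun j => ?_) (fun j => ?_) j <;> simp [e]
  rw [hinit, ← (hv.reindex e).eq_exp t]
  simpa [e] using hvy t ht i

theorem IsSuperLinearizable.conj {f φ φinv h : (Fin n → ℝ) → (Fin n → ℝ)}
    (hf : IsSuperLinearizable f) (hφ : IsPolyMap φ) (hφinv : IsPolyMap φinv)
    (hinv : Function.LeftInverse φinv φ) (hinv' : Function.RightInverse φinv φ)
    (hh : ∀ y, h y = fderiv ℝ φ (φinv y) (f (φinv y))) :
    IsSuperLinearizable h := by
  obtain ⟨k, M, p, hp, hM⟩ := hf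
  have hφdiff := hφ.differentiable
  obtain ⟨Pφ, hPφ⟩ := hφ
  obtain ⟨d, C, hC⟩ := exists_mulVec_tensorPow_eq_eval fun i => rename (Fin.castAdd k) (Pφ i)
  have hCφ (z : Fin (n + k) → ℝ) :
      C *ᵥ tensorPow d (Sum.elim z 1) = φ fun i => z (Fin.castAdd k i) := by
    funext i
    simp [hC, eval_rename, hPφ, Function.comp_def]
  let lift : (Fin n → ℝ) → Fin (n + k) → ℝ := fun y => Fin.append (φinv y) (p (φinv y))
  let N := kroneckerSum d (Matrix.fromBlocks M 0 0 (0 : Matrix Unit Unit ℝ))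
  refine .of_linearFlow_lift (Matrix.fromBlocks 0 (C * N) 0 N)
    (fun y => tensorPow d (Sum.elim (lift y) 1))
    ((hφinv.append (hp.comp hφinv)).exists_tensorPow_sumElim_one d) fun y hy => ?_
  let x := φinv ∘ y
  have hx (t : ℝ) (ht : 0 ≤ t) : HasDerivAt x (f (x t)) t :=
    HasDerivAt.comp_of_conj hφdiff hφinv.differentiable hinv hinv' (hh (y t) ▸ hy t ht)
  let z := fun t : ℝ => NormedSpace.exp (t • M) *ᵥ lift (y 0)
  have hz : IsLinearFlow (Matrix.fromBlocks M 0 0 (0 : Matrix Unit Unit ℝ))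
      fun t => Sum.elim (z t) 1 :=
    (isLinearFlow_exp M _).sumElim (isLinearFlow_const 1)
  have hzx (t : ℝ) (ht : 0 ≤ t) : (fun i => z t (Fin.castAdd k i)) = x t :=
    funext (hM (x 0) x rfl hx t ht)
  refine ⟨_, (hz.tensorPow d).sumElim_mulVec C, ?_, fun t ht i => ?_⟩
  · have hz0 : z 0 = lift (y 0) := by simp [z]
    simp only [hCφ, hz0]
    simp [lift, hinv' (y 0)]
  · simp only [hCφ, hzx t ht]
    exact congrFun (hinv' (y t)) i

end Conjugation

theorem superlinearizable_of_tame_general {n : ℕ}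
    (f φ φinv h : (Fin n → ℝ) → (Fin n → ℝ))
    (hfsl : IsSuperLinearizable f)
    (hφ : IsTame φ)
    (hinv : Function.LeftInverse φinv φ) (hinv' : Function.RightInverse φinv φ)
    (hh : ∀ y, h y = fderiv ℝ φ (φinv y) (f (φinv y))) :
    IsSuperLinearizable h := by
  obtain ⟨hφpoly, ψ, hψpoly, hψ, -⟩ := hφ.isPolyAut
  have hφinv : φinv = ψ := hψ.eq_rightInverse hinv' |>.symm
  exact hfsl.conj hφpoly (hφinv ▸ hψpoly) hinv hinv' hh

/-- If `f` is a super-linearizable polynomial vector field and `φ` is a tame automorphism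
with inverse `φinv`, then `h(y) = Dφ(φ⁻¹(y)) · f(φ⁻¹(y))` is super-linearizable. -/
theorem superlinearizable_of_tame {n : ℕ}
    (f φ φinv h : (Fin n → ℝ) → (Fin n → ℝ))
    (hfpoly : IsPolyMap f) (hfsl : IsSuperLinearizable f)
    (hφ : IsTame φ)
    (hinv : Function.LeftInverse φinv φ) (hinv' : Function.RightInverse φinv φ)
    (hh : ∀ y, h y = fderiv ℝ φ (φinv y) (f (φinv y))) :
    IsSuperLinearizable h :=
  superlinearizable_of_tame_general f φ φinv h hfsl hφ hinv hinv' hh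
end

section
/- Let f : ℝⁿ → ℝⁿ be a polynomial vector field satisfying the WDG condition: for every cycle i₀, i₁, …, i_m = i₀ (m ≥ 1) of indices in {1, …, n} such that each partial derivative ∂f_{i_{ℓ+1}}/∂x_{i_ℓ} is a nonzero polynomial, the product ∏_{ℓ=0}^{m−1} ∂f_{i_{ℓ+1}}/∂x_{i_ℓ} is a constant polynomial. Then f is super-linearizable. -/
open Matrix MvPolynomial

/-- The partial derivative of `h : ℝⁿ → ℝ` with respect to the `j`-th coordinate. -/
noncomputable def pd {n : ℕ} (h : (Fin n → ℝ) → ℝ) (j : Fin n) : (Fin n → ℝ) → ℝ :=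
  fun x => fderiv ℝ h x (Pi.single j 1)

/-- The WDG (weighted dependency graph) condition for a vector field `h : ℝⁿ → ℝⁿ`:
along every cycle `i₀, i₁, …, i_m = i₀` (m ≥ 1) all of whose edge weights
`∂h_{i_{ℓ+1}}/∂x_{i_ℓ}` are nonzero, the product of the edge weights is constant. -/
def SatisfiesWDG {n : ℕ} (h : (Fin n → ℝ) → (Fin n → ℝ)) : Prop :=
  ∀ m : ℕ, 1 ≤ m → ∀ c : ℕ → Fin n, c m = c 0 →
    (∀ ℓ < m, pd (fun x => h x (c (ℓ + 1))) (c ℓ) ≠ 0) →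
    ∃ r : ℝ, ∀ x : Fin n → ℝ,
      (∏ ℓ ∈ Finset.range m, pd (fun x' => h x' (c (ℓ + 1))) (c ℓ) x) = r

/-!
Write `P i` for the components of `f` and `lieDeriv P Q = ∑ j, P j * ∂Q/∂x j` for the derivative
of `Q` along `f`, so that `d/dt Q(x t) = (lieDeriv P Q)(x t)` along every solution. It suffices to
find a finite set `S` of monomials containing the variables such that `lieDeriv P` preserves the
polynomials supported in `S`: the values of these monomials along a solution then satisfy a linear
ODE `Y' = A Y`, whence `Y t = exp (t A) Y 0`.

If `∂P i/∂x j ≠ 0` lies on a cycle of the dependency graph, the WDG condition makes it a divisor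
of a nonzero constant, hence constant, so the only monomial of `P i` involving `x j` is `x j`
itself. Give `x i` the weight `N ^ r i`, where `N` exceeds every total degree of the `P i` and
`r i` counts the vertices strictly upstream of `i`. Then no monomial of `P i` outweighs `x i`,
so `lieDeriv P` does not increase weights, and the monomials of bounded weight form `S`.
-/

open Finset

namespace Relation

theorem ReflTransGen.exists_seq {α : Type*} {r : α → α → Prop} {a b : α}
    (h : ReflTransGen r a b) :
    ∃ (m : ℕ) (c : ℕ → α), c 0 = a ∧ c m = b ∧ ∀ ℓ < m, r (c ℓ) (c (ℓ + 1)) := by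
  induction h using ReflTransGen.head_induction_on with
  | refl => exact ⟨0, fun _ => b, rfl, rfl, fun _ h => absurd h (Nat.not_lt_zero _)⟩
  | head hac _ ih =>
    obtain ⟨m, c, hc0, hcm, hc⟩ := ih
    refine ⟨m + 1, fun | 0 => _ | ℓ + 1 => c ℓ, rfl, hcm, ?_⟩
    rintro (_ | ℓ) hℓ
    · simpa [hc0] using hac
    · exact hc ℓ (by omega)

variable {α : Type*} [Fintype α] (r : α → α → Prop)

open Classical in
noncomputable def strictPredCard (a : α) : ℕ :=
  #{b | ReflTransGen r b a ∧ ¬ReflTransGen r a b}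

variable {r}

theorem strictPredCard_eq {a b : α} (hab : ReflTransGen r a b) (hba : ReflTransGen r b a) :
    strictPredCard r a = strictPredCard r b := by
  classical
  unfold strictPredCard
  congr 1
  exact filter_congr fun c _ => ⟨fun ⟨h1, h2⟩ => ⟨h1.trans hab, fun h => h2 (hab.trans h)⟩,
    fun ⟨h1, h2⟩ => ⟨h1.trans hba, fun h => h2 (hba.trans h)⟩⟩

theorem strictPredCard_lt {a b : α} (hba : ReflTransGen r b a) (hab : ¬ReflTransGen r a b) :
    strictPredCard r b < strictPredCard r a := by
  classical
  refine card_lt_card (ssubset_iff_of_subset ?_ |>.mpr ⟨b, ?_, ?_⟩)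
  · intro c hc
    simp only [mem_filter, mem_univ, true_and] at hc ⊢
    exact ⟨hc.1.trans hba, fun h => hab (h.trans hc.1)⟩
  · simpa using ⟨hba, hab⟩
  · simp

end Relation

namespace MvPolynomial

open Relation

variable {σ R : Type*}

section CommSemiring

variable [CommSemiring R]

theorem coeff_sub_single_pderiv (Q : MvPolynomial σ R) {α : σ →₀ ℕ} {j : σ} (hj : α j ≠ 0) :
    coeff (α - Finsupp.single j 1) (pderiv j Q) = coeff α Q * α j := by
  rw [coeff_pderiv, Finsupp.sub_add_single_one_cancel hj, Finsupp.tsub_apply,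
    Finsupp.single_eq_same, ← Nat.cast_add_one, Nat.sub_add_cancel (Nat.one_le_iff_ne_zero.mpr hj)]

noncomputable def lieDeriv [Fintype σ] (P : σ → MvPolynomial σ R) (Q : MvPolynomial σ R) :
    MvPolynomial σ R :=
  ∑ j, P j * pderiv j Q

theorem weight_le_of_mem_support_lieDeriv [Fintype σ] {P : σ → MvPolynomial σ R} {w : σ → ℕ}
    (hP : ∀ i, ∀ γ ∈ (P i).support, Finsupp.weight w γ ≤ w i)
    {Q : MvPolynomial σ R} {B : ℕ} (hQ : ∀ β ∈ Q.support, Finsupp.weight w β ≤ B)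
    {α : σ →₀ ℕ} (hα : α ∈ (lieDeriv P Q).support) : Finsupp.weight w α ≤ B := by
  classical
  obtain ⟨j, -, hj⟩ := mem_biUnion.mp (support_sum hα)
  obtain ⟨γ, hγ, β, hβ, rfl⟩ := mem_add.mp (support_mul _ _ hj)
  have hβj : β + Finsupp.single j 1 ∈ Q.support := by
    rw [mem_support_iff] at hβ ⊢
    intro h
    rw [coeff_pderiv, h, zero_mul] at hβ
    exact hβ rfl
  have hQβ := hQ _ hβj
  rw [map_add, Finsupp.weight_single, one_smul] at hQβ
  rw [map_add]
  have := hP j γ hγ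
  omega

def dependencyRel (P : σ → MvPolynomial σ R) (j i : σ) : Prop :=
  pderiv j (P i) ≠ 0

def HasConstCycleProducts (P : σ → MvPolynomial σ R) : Prop :=
  ∀ m, 1 ≤ m → ∀ c : ℕ → σ, c m = c 0 → (∀ ℓ < m, dependencyRel P (c ℓ) (c (ℓ + 1))) →
    ∃ r, ∏ ℓ ∈ range m, pderiv (c ℓ) (P (c (ℓ + 1))) = C r

end CommSemiring

section Domain

variable [CommRing R] [IsDomain R]

theorem HasConstCycleProducts.pderiv_eq_C {P : σ → MvPolynomial σ R}
    (hP : HasConstCycleProducts P) {i j : σ} (hji : dependencyRel P j i)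
    (hij : ReflTransGen (dependencyRel P) i j) : ∃ r, pderiv j (P i) = C r := by
  obtain ⟨m, c, rfl, hcm, hc⟩ := hij.exists_seq
  obtain ⟨r, hr⟩ := hP (m + 1) (by omega) (fun | 0 => j | ℓ + 1 => c ℓ) hcm <| by
    rintro (_ | ℓ) hℓ
    · exact hji
    · exact hc ℓ (by omega)
  rw [prod_range_succ'] at hr
  have hpath : ∏ ℓ ∈ range m, pderiv (c ℓ) (P (c (ℓ + 1))) ≠ 0 :=
    prod_ne_zero_iff.mpr fun ℓ hℓ => hc ℓ (mem_range.mp hℓ)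
  have hdeg := totalDegree_mul_of_isDomain hpath hji
  rw [hr, totalDegree_C] at hdeg
  exact ⟨_, totalDegree_eq_zero_iff_eq_C.mp (by omega)⟩

variable [CharZero R]

theorem coeff_sub_single_pderiv_ne_zero {Q : MvPolynomial σ R} {α : σ →₀ ℕ} {j : σ}
    (hα : α ∈ Q.support) (hj : α j ≠ 0) :
    coeff (α - Finsupp.single j 1) (pderiv j Q) ≠ 0 := by
  rw [coeff_sub_single_pderiv Q hj]
  exact mul_ne_zero (mem_support_iff.mp hα) (Nat.cast_ne_zero.mpr hj)

theorem pderiv_ne_zero_of_mem_support {Q : MvPolynomial σ R} {α : σ →₀ ℕ} {j : σ}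
    (hα : α ∈ Q.support) (hj : α j ≠ 0) : pderiv j Q ≠ 0 := fun h =>
  coeff_sub_single_pderiv_ne_zero hα hj (by rw [h, coeff_zero])

theorem eq_single_of_pderiv_eq_C {Q : MvPolynomial σ R} {r : R} {α : σ →₀ ℕ} {j : σ}
    (hQ : pderiv j Q = C r) (hα : α ∈ Q.support) (hj : α j ≠ 0) :
    α = Finsupp.single j 1 := by
  classical
  have h := coeff_sub_single_pderiv_ne_zero hα hj
  rw [hQ, coeff_C, ite_ne_right_iff] at h
  rw [← Finsupp.sub_add_single_one_cancel hj, ← h.1, zero_add]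

variable [Fintype σ]

noncomputable def dependencyWeight (P : σ → MvPolynomial σ R) (i : σ) : ℕ :=
  ((univ.sup fun i => (P i).totalDegree) + 1) ^ strictPredCard (dependencyRel P) i

theorem weight_le_dependencyWeight {P : σ → MvPolynomial σ R} (hP : HasConstCycleProducts P)
    {i : σ} {γ : σ →₀ ℕ} (hγ : γ ∈ (P i).support) :
    Finsupp.weight (dependencyWeight P) γ ≤ dependencyWeight P i := by
  set N := (univ.sup fun i => (P i).totalDegree) + 1
  have hedge (j) (hj : j ∈ γ.support) : dependencyRel P j i :=
    pderiv_ne_zero_of_mem_support hγ (Finsupp.mem_support_iff.mp hj)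
  by_cases hcyc : ∃ j ∈ γ.support, ReflTransGen (dependencyRel P) i j
  · obtain ⟨j, hj, hij⟩ := hcyc
    obtain ⟨r, hr⟩ := hP.pderiv_eq_C (hedge j hj) hij
    rw [eq_single_of_pderiv_eq_C hr hγ (Finsupp.mem_support_iff.mp hj), Finsupp.weight_single,
      one_smul]
    exact (congrArg (N ^ ·) (strictPredCard_eq (.single (hedge j hj)) hij)).le
  · push Not at hcyc
    have hbelow (j) (hj : j ∈ γ.support) : N * dependencyWeight P j ≤ dependencyWeight P i := by
      rw [dependencyWeight, dependencyWeight, ← pow_succ']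
      exact Nat.pow_le_pow_right (by omega) (strictPredCard_lt (.single (hedge j hj)) (hcyc j hj))
    have hdeg : γ.degree < N := Nat.lt_succ_of_le <|
      (le_totalDegree hγ).trans (le_sup (f := fun i => (P i).totalDegree) (mem_univ i))
    refine Nat.le_of_mul_le_mul_left ?_ (by omega : 0 < N)
    calc N * Finsupp.weight (dependencyWeight P) γ
        = ∑ j ∈ γ.support, γ j * (N * dependencyWeight P j) := by
          rw [Finsupp.weight_apply, Finsupp.sum, mul_sum]
          exact sum_congr rfl fun j _ => by rw [smul_eq_mul]; ring
      _ ≤ ∑ j ∈ γ.support, γ j * dependencyWeight P i :=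
          sum_le_sum fun j hj => Nat.mul_le_mul_left _ (hbelow j hj)
      _ = γ.degree * dependencyWeight P i := by rw [← sum_mul, Finsupp.degree_apply]
      _ ≤ N * dependencyWeight P i := Nat.mul_le_mul_right _ hdeg.le

end Domain

section Calculus

variable {𝕜 : Type*} [NontriviallyNormedField 𝕜] [Fintype σ]

theorem hasFDerivAt_eval (Q : MvPolynomial σ 𝕜) (x : σ → 𝕜) :
    HasFDerivAt (fun y => eval y Q)
      (∑ j, eval x (pderiv j Q) • (ContinuousLinearMap.proj j : (σ → 𝕜) →L[𝕜] 𝕜)) x := by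
  classical
  induction Q using MvPolynomial.induction_on with
  | C a =>
    simp only [eval_C]
    refine (hasFDerivAt_const (𝕜 := 𝕜) a x).congr_fderiv ?_
    ext v
    simp
  | add p q hp hq =>
    simp only [map_add]
    refine (hp.fun_add hq).congr_fderiv ?_
    ext v
    simp [sum_add_distrib, add_mul]
  | mul_X p i hp =>
    simp only [map_mul, eval_X]
    refine (hp.fun_mul (ContinuousLinearMap.proj i).hasFDerivAt).congr_fderiv ?_
    ext v
    simp [sum_add_distrib, add_mul, mul_sum, Pi.single_apply, apply_ite (eval x), mul_assoc]

theorem hasDerivAt_eval_lieDeriv (P : σ → MvPolynomial σ 𝕜) (Q : MvPolynomial σ 𝕜)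
    {x : 𝕜 → σ → 𝕜} {t : 𝕜} (hx : HasDerivAt x (fun j => eval (x t) (P j)) t) :
    HasDerivAt (fun s => eval (x s) Q) (eval (x t) (lieDeriv P Q)) t := by
  refine ((hasFDerivAt_eval Q (x t)).comp_hasDerivAt t hx).congr_deriv ?_
  simp [lieDeriv, mul_comm]

end Calculus

theorem pd_eval {n : ℕ} (Q : MvPolynomial (Fin n) ℝ) (j : Fin n) :
    pd (fun y => eval y Q) j = fun y => eval y (pderiv j Q) := by
  funext y
  simp [pd, (hasFDerivAt_eval Q y).fderiv, Pi.single_apply]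

theorem hasConstCycleProducts_of_satisfiesWDG {n : ℕ} {f : (Fin n → ℝ) → Fin n → ℝ}
    {P : Fin n → MvPolynomial (Fin n) ℝ} (hP : ∀ x i, f x i = eval x (P i))
    (hf : SatisfiesWDG f) : HasConstCycleProducts P := by
  have hpd (i j : Fin n) : pd (fun x => f x i) j = fun y => eval y (pderiv j (P i)) := by
    simp only [hP, pd_eval]
  intro m hm c hc hedge
  obtain ⟨r, hr⟩ := hf m hm c hc fun ℓ hℓ h =>
    hedge ℓ hℓ (MvPolynomial.funext fun y => by simpa [hpd] using congrFun h y)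
  exact ⟨r, MvPolynomial.funext fun y => by simpa [hpd] using hr y⟩

end MvPolynomial

section LinearODE

open NormedSpace

variable {ι : Type*} [Fintype ι] [DecidableEq ι]

-- Matrices carry no global norm; `exp` does not depend on the one chosen here.
attribute [local instance] Matrix.linftyOpNormedRing Matrix.linftyOpNormedAlgebra

theorem Matrix.hasDerivAt_exp_smul_mulVec (A : Matrix ι ι ℝ) (v : ι → ℝ) (t : ℝ) :
    HasDerivAt (fun s : ℝ => exp (s • A) *ᵥ v) (A *ᵥ (exp (t • A) *ᵥ v)) t := by
  let evalAt : Matrix ι ι ℝ →L[ℝ] ι → ℝ :=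
    LinearMap.toContinuousLinearMap ((mulVecBilin ℝ ℝ).flip v)
  exact (evalAt.hasFDerivAt.comp_hasDerivAt t (hasDerivAt_exp_smul_const' A t)).congr_deriv
    (mulVec_mulVec ..).symm

theorem Matrix.exp_smul_mulVec_eq_of_hasDerivAt (A : Matrix ι ι ℝ) {y : ℝ → ι → ℝ}
    (hy : ∀ t, 0 ≤ t → HasDerivAt y (A *ᵥ y t) t) {t : ℝ} (ht : 0 ≤ t) :
    exp (t • A) *ᵥ y 0 = y t := by
  have hA : LipschitzWith ‖(mulVecLin A).toContinuousLinearMap‖₊ (A *ᵥ ·) :=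
    (mulVecLin A).toContinuousLinearMap.lipschitz
  refine ODE_solution_unique_of_mem_Icc_right (v := fun _ => (A *ᵥ ·)) (s := fun _ => Set.univ)
    (fun _ _ => hA.lipschitzOnWith) ?_
    (fun s _ => (hasDerivAt_exp_smul_mulVec A _ s).hasDerivWithinAt) (fun _ _ => trivial) ?_
    (fun s hs => (hy s hs.1).hasDerivWithinAt) (fun _ _ => trivial) (by simp) ⟨ht, le_rfl⟩
  · exact fun s _ => (hasDerivAt_exp_smul_mulVec A _ s).continuousAt.continuousWithinAt
  · exact fun s hs => (hy s hs.1).continuousAt.continuousWithinAt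

end LinearODE

theorem isSuperLinearizable_of_lieDeriv_eq_sum {n k : ℕ} {f : (Fin n → ℝ) → Fin n → ℝ}
    {P : Fin n → MvPolynomial (Fin n) ℝ} (hP : ∀ x i, f x i = eval x (P i))
    (G : Fin (n + k) → MvPolynomial (Fin n) ℝ) (hG : ∀ i, G (Fin.castAdd k i) = X i)
    (A : Matrix (Fin (n + k)) (Fin (n + k)) ℝ) (hA : ∀ a, lieDeriv P (G a) = ∑ b, A a b • G b) :
    IsSuperLinearizable f := by
  refine ⟨k, A, fun x b => eval x (G (Fin.natAdd n b)),
    ⟨fun b => G (Fin.natAdd n b), fun _ _ => rfl⟩, fun x₀ x hx₀ hx t ht i => ?_⟩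
  let Y (s : ℝ) (a : Fin (n + k)) : ℝ := eval (x s) (G a)
  have hY (s : ℝ) (hs : 0 ≤ s) : HasDerivAt Y (A *ᵥ Y s) s := by
    refine hasDerivAt_pi.mpr fun a => ?_
    have hxs : f (x s) = fun j => eval (x s) (P j) := funext (hP (x s))
    simpa [Y, hA, mulVec, dotProduct, mul_comm] using
      hasDerivAt_eval_lieDeriv P (G a) (hxs ▸ hx s hs)
  have hY₀ : Fin.append x₀ (fun b => eval x₀ (G (Fin.natAdd n b))) = Y 0 := by
    funext a
    induction a using Fin.addCases <;> simp [Y, hx₀, hG]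
  rw [hY₀, Matrix.exp_smul_mulVec_eq_of_hasDerivAt A hY ht]
  simp [Y, hG]

theorem isSuperLinearizable_of_lieDeriv_support_subset {n : ℕ} {f : (Fin n → ℝ) → Fin n → ℝ}
    {P : Fin n → MvPolynomial (Fin n) ℝ} (hP : ∀ x i, f x i = eval x (P i))
    (S : Finset (Fin n →₀ ℕ)) (hX : ∀ i, Finsupp.single i 1 ∈ S)
    (hS : ∀ Q : MvPolynomial (Fin n) ℝ, Q.support ⊆ S → (lieDeriv P Q).support ⊆ S) :
    IsSuperLinearizable f := by
  classical
  let e : Fin #S ≃ S := S.equivFin.symm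
  let G : Fin (n + #S) → MvPolynomial (Fin n) ℝ := Fin.addCases X fun b => monomial (e b) 1
  have hGS (a) : (G a).support ⊆ S := by
    induction a using Fin.addCases <;> simp [G, support_X, support_monomial, hX]
  refine isSuperLinearizable_of_lieDeriv_eq_sum hP G (fun i => by simp [G])
    (fun a => Fin.addCases (fun _ => 0) fun b => coeff (e b) (lieDeriv P (G a))) fun a => ?_
  have hL := hS _ (hGS a)
  generalize lieDeriv P (G a) = L at hL ⊢
  simp only [Fin.sum_univ_add, Fin.addCases_left, Fin.addCases_right, zero_smul, sum_const_zero,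
    zero_add, G, smul_monomial, smul_eq_mul, mul_one]
  rw [e.sum_comp fun α : S => monomial (α : Fin n →₀ ℕ) (coeff α L),
    sum_coe_sort S fun α => monomial α (coeff α L)]
  conv_lhs => rw [← support_sum_monomial_coeff L]
  exact sum_subset hL fun α _ hα => by rw [notMem_support_iff.mp hα, monomial_zero]

/-- A polynomial vector field satisfying the WDG condition is super-linearizable. -/
theorem superlinearizable_of_wdg {n : ℕ} (f : (Fin n → ℝ) → (Fin n → ℝ))
    (hfpoly : IsPolyMap f) (hwdg : SatisfiesWDG f) :
    IsSuperLinearizable f := by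
  obtain ⟨P, hP⟩ := hfpoly
  have hcyc := hasConstCycleProducts_of_satisfiesWDG hP hwdg
  have hw (i : Fin n) : dependencyWeight P i ≠ 0 := pow_ne_zero _ (Nat.succ_ne_zero _)
  have hS := Finsupp.finite_of_nat_weight_le _ hw (univ.sup (dependencyWeight P))
  refine isSuperLinearizable_of_lieDeriv_support_subset hP hS.toFinset (fun i => ?_)
    fun Q hQ α hα => ?_
  · simpa [Finsupp.weight_single] using le_sup (f := dependencyWeight P) (mem_univ i)
  · rw [Set.Finite.mem_toFinset]
    exact weight_le_of_mem_support_lieDeriv (fun i γ hγ => weight_le_dependencyWeight hcyc hγ)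
      (fun β hβ => hS.mem_toFinset.mp (hQ hβ)) hα
end

section
/- Let f : ℝⁿ → ℝⁿ be a super-linearizable polynomial vector field and let P ∈ ℝ^{n×n} be an invertible matrix. Then the polynomial vector field z ↦ P f(P⁻¹ z) is super-linearizable. -/
open Matrix MvPolynomial

/-! If `x` solves `ẋ = f x` then `z = P x` solves `ż = P f (P⁻¹ z)`. The lifted state `(x, p x)`
evolves by `exp (t A)`, so `(z, p (P⁻¹ z)) = diag(P, 1) (x, p x)` evolves by the exponential of
`diag(P, 1) A diag(P, 1)⁻¹`, whose first `n` coordinates are `P x = z`. -/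

theorem IsPolyMap.comp_mulVec {n m l : ℕ} {p : (Fin n → ℝ) → (Fin m → ℝ)} (hp : IsPolyMap p)
    (M : Matrix (Fin n) (Fin l) ℝ) : IsPolyMap (fun z => p (M *ᵥ z)) := by
  obtain ⟨q, hq⟩ := hp
  refine ⟨fun i => bind₁ (fun j => ∑ a, C (M j a) * X a) (q i), fun z i => ?_⟩
  have hlin : (fun j => eval z (∑ a, C (M j a) * X a)) = M *ᵥ z := by
    ext j
    simp [mulVec, dotProduct]
  show p (M *ᵥ z) i = _
  rw [hq, ← hlin]
  exact (eval₂Hom_bind₁ (RingHom.id ℝ) z _ (q i)).symm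

theorem HasDerivAt.const_mulVec {ι κ : Type*} [Fintype ι] [Fintype κ] {z : ℝ → κ → ℝ}
    {v : κ → ℝ} {t : ℝ} (hz : HasDerivAt z v t) (M : Matrix ι κ ℝ) :
    HasDerivAt (fun s => M *ᵥ z s) (M *ᵥ v) t :=
  M.mulVecLin.toContinuousLinearMap.hasFDerivAt.comp_hasDerivAt t hz

section BlockDiag

variable {R : Type*} [Semiring R] {n : ℕ} (k : ℕ)

def blockDiagOne (P : Matrix (Fin n) (Fin n) R) : Matrix (Fin (n + k)) (Fin (n + k)) R :=
  reindex finSumFinEquiv finSumFinEquiv (fromBlocks P 0 0 1)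

def blockDiagOneHom : Matrix (Fin n) (Fin n) R →* Matrix (Fin (n + k)) (Fin (n + k)) R where
  toFun := blockDiagOne k
  map_one' := by simp [blockDiagOne, fromBlocks_one]
  map_mul' P Q := by
    simp only [blockDiagOne, reindex_apply, submatrix_mul_equiv, fromBlocks_multiply]
    simp

theorem blockDiagOne_mulVec_append (P : Matrix (Fin n) (Fin n) R) (x : Fin n → R)
    (y : Fin k → R) :
    blockDiagOne k P *ᵥ Fin.append x y = Fin.append (P *ᵥ x) y := by
  have h : Fin.append x y ∘ finSumFinEquiv = Sum.elim x y := by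
    ext (j | j) <;> simp
  rw [blockDiagOne, reindex_apply, submatrix_mulVec_equiv, Equiv.symm_symm, h, fromBlocks_mulVec]
  ext j
  refine Fin.addCases (fun j => ?_) (fun j => ?_) j <;> simp

theorem blockDiagOne_mulVec_castAdd (P : Matrix (Fin n) (Fin n) R) (u : Fin (n + k) → R)
    (i : Fin n) :
    (blockDiagOne k P *ᵥ u) (Fin.castAdd k i) = (P *ᵥ fun j => u (Fin.castAdd k j)) i := by
  conv_lhs =>
    rw [← Fin.append_castAdd_natAdd (f := u), blockDiagOne_mulVec_append, Fin.append_left]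

end BlockDiag

theorem superlinearizable_linear_change_general {n : ℕ}
    (f : (Fin n → ℝ) → (Fin n → ℝ))
    (hfsl : IsSuperLinearizable f)
    (P : Matrix (Fin n) (Fin n) ℝ) (hP : IsUnit P.det) :
    IsSuperLinearizable (fun z => P.mulVec (f (P⁻¹.mulVec z))) := by
  obtain ⟨k, A, p, hp, hsol⟩ := hfsl
  refine ⟨k, blockDiagOne k P * A * blockDiagOne k P⁻¹, fun z => p (P⁻¹ *ᵥ z),
    hp.comp_mulVec P⁻¹, ?_⟩
  intro z₀ z hz₀ hz t ht i
  have hx : ∀ s, 0 ≤ s → HasDerivAt (fun s => P⁻¹ *ᵥ z s) (f (P⁻¹ *ᵥ z s)) s := fun s hs => by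
    simpa only [mulVec_mulVec, nonsing_inv_mul P hP, one_mulVec] using (hz s hs).const_mulVec P⁻¹
  have hexp : NormedSpace.exp (blockDiagOne k P * (t • A) * blockDiagOne k P⁻¹) =
      blockDiagOne k P * NormedSpace.exp (t • A) * blockDiagOne k P⁻¹ :=
    Matrix.exp_units_conj (Units.map (blockDiagOneHom k) (nonsingInvUnit P hP)) (t • A)
  rw [← smul_mul_assoc, ← mul_smul_comm, hexp, ← mulVec_mulVec, ← mulVec_mulVec,
    blockDiagOne_mulVec_append, blockDiagOne_mulVec_castAdd]
  have hxt := hsol (P⁻¹ *ᵥ z₀) (fun s => P⁻¹ *ᵥ z s) (by rw [hz₀]) hx t ht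
  simp only [hxt, mulVec_mulVec, mul_nonsing_inv P hP, one_mulVec]

/-- Super-linearizability is preserved under invertible linear changes of variables:
if `f` is super-linearizable and `P` is invertible, then `z ↦ P f(P⁻¹ z)` is
super-linearizable. -/
theorem superlinearizable_linear_change {n : ℕ}
    (f : (Fin n → ℝ) → (Fin n → ℝ))
    (hfpoly : IsPolyMap f) (hfsl : IsSuperLinearizable f)
    (P : Matrix (Fin n) (Fin n) ℝ) (hP : IsUnit P.det) :
    IsSuperLinearizable (fun z => P.mulVec (f (P⁻¹.mulVec z))) :=
  superlinearizable_linear_change_general f hfsl P hP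
end

section
/- Let M = (a_{ij}) ∈ ℝ^{n×n} satisfy a_{in} = 0 for all i ≠ n, let g be a real polynomial in n−1 variables, let φ(x) = (x₁, …, x_{n−1}, xₙ + g(x₁, …, x_{n−1})) be the corresponding elementary transformation of ℝⁿ, and let h : ℝⁿ → ℝⁿ be the vector field obtained from the linear system ẋ = Mx by the change of variables y = φ(x), i.e., h(y) = Dφ(φ⁻¹(y)) · M · φ⁻¹(y). Then h satisfies the WDG condition. -/
open Matrix MvPolynomial

/-!
Write `φ` as the shear `x ↦ x + P (π x) • v`, where `π` forgets the last coordinate,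
`v = e_last` and `P = eval · g`. Then `π v = 0`, and the hypothesis on `M` says that `v` is an
eigenvector of `M`. Pushing `x ↦ M x` forward by the shear gives `h y = M y + Q y • v`, where
`Q` is invariant under translation along `v`. Hence `∂h_i/∂y_j` is the constant `M i j`
unless `i = last ≠ j`. Since `∂h_i/∂y_last = M i last = 0` for `i ≠ last`, a cycle through the
last vertex never leaves it, so no cycle uses a non-constant edge.
-/

theorem satisfiesWDG_of_pd_eq_const_of_sink {n : ℕ} {h : (Fin n → ℝ) → (Fin n → ℝ)} (p : Fin n)
    (W : Matrix (Fin n) (Fin n) ℝ)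
    (hW : ∀ i j, i ≠ p ∨ j = p → pd (fun x => h x i) j = fun _ => W i j)
    (hp : ∀ i ≠ p, W i p = 0) :
    SatisfiesWDG h := by
  intro m _ c hc hnz
  have step : ∀ ℓ < m, c ℓ = p → c (ℓ + 1) = p := by
    intro ℓ hℓ hcℓ
    by_contra hne
    apply hnz ℓ hℓ
    rw [hW _ _ (.inl hne), hcℓ, hp _ hne]
    rfl
  have propagate : ∀ k ℓ, k ≤ ℓ → ℓ ≤ m → c k = p → c ℓ = p := by
    intro k ℓ hkℓ
    induction ℓ, hkℓ using Nat.le_induction with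
    | base => exact fun _ hk => hk
    | succ ℓ _ ih => exact fun hℓ hk => step ℓ hℓ (ih (Nat.le_of_succ_le hℓ) hk)
  have edge : ∀ ℓ < m, c (ℓ + 1) ≠ p ∨ c ℓ = p := by
    refine fun ℓ hℓ => or_iff_not_imp_left.2 fun hℓp => ?_
    have hc0 : c 0 = p := hc ▸ propagate (ℓ + 1) m hℓ le_rfl (not_not.1 hℓp)
    exact propagate 0 ℓ ℓ.zero_le hℓ.le hc0
  refine ⟨∏ ℓ ∈ Finset.range m, W (c (ℓ + 1)) (c ℓ),
    fun x => Finset.prod_congr rfl fun ℓ hℓ => ?_⟩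
  rw [hW _ _ (edge ℓ (Finset.mem_range.1 hℓ))]

section Shear

variable {𝕜 E F : Type*} [NontriviallyNormedField 𝕜] [NormedAddCommGroup E] [NormedSpace 𝕜 E]
  [NormedAddCommGroup F] [NormedSpace 𝕜 F]

theorem fderiv_apply_eq_zero_of_forall_add_smul {f : E → F} {x v : E}
    (hf : ∀ t : 𝕜, f (x + t • v) = f x) : fderiv 𝕜 f x v = 0 := by
  by_cases hfx : DifferentiableAt 𝕜 f x
  · have hline : HasDerivAt (fun t : 𝕜 => x + t • v) v 0 := by
      simpa using ((hasDerivAt_id (0 : 𝕜)).smul_const v).const_add x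
    have := hfx.hasFDerivAt.comp_hasDerivAt_of_eq (0 : 𝕜) hline (by simp)
    exact this.unique (by simpa [Function.comp_def, hf] using hasDerivAt_const (0 : 𝕜) (f x))
  · simp [fderiv_zero_of_not_differentiableAt hfx]

variable (π : E →L[𝕜] F) (P : F → 𝕜) (v : E)

theorem fderiv_add_smul_comp_apply {x : E} (hP : DifferentiableAt 𝕜 P (π x)) (w : E) :
    fderiv 𝕜 (fun x => x + P (π x) • v) x w = w + fderiv 𝕜 P (π x) (π w) • v := by
  have hPπ : HasFDerivAt (fun x => P (π x)) ((fderiv 𝕜 P (π x)).comp π) x :=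
    hP.hasFDerivAt.comp x π.hasFDerivAt
  rw [show (fun x => x + P (π x) • v) = id + fun x => P (π x) • v from rfl,
    ((hasFDerivAt_id x).add (hPπ.smul_const v)).fderiv]
  rfl

theorem fderiv_add_smul_comp_pushforward (hπv : π v = 0) (A : E →L[𝕜] E) (μ : 𝕜)
    (hAv : A v = μ • v) {y : E} (hP : DifferentiableAt 𝕜 P (π y)) :
    fderiv 𝕜 (fun x => x + P (π x) • v) (y - P (π y) • v) (A (y - P (π y) • v)) =
      A y + (fderiv 𝕜 P (π y) (π (A y)) - μ * P (π y)) • v := by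
  have hπ : π (y - P (π y) • v) = π y := by simp [hπv]
  rw [fderiv_add_smul_comp_apply π P v (x := y - P (π y) • v) (by rwa [hπ]), hπ]
  simp only [map_sub, map_smul, hAv, hπv, smul_zero, sub_zero]
  module

end Shear

theorem pd_clm_apply_add_mul {n : ℕ} (A : (Fin n → ℝ) →L[ℝ] (Fin n → ℝ)) {Q : (Fin n → ℝ) → ℝ}
    {x : Fin n → ℝ} (hQ : DifferentiableAt ℝ Q x) (v : Fin n → ℝ) (i j : Fin n) :
    pd (fun y => A y i + Q y * v i) j x =
      A (Pi.single j 1) i + fderiv ℝ Q x (Pi.single j 1) * v i := by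
  have hi : HasFDerivAt (fun y => A y i + Q y * v i)
      ((ContinuousLinearMap.proj i).comp A + v i • fderiv ℝ Q x) x :=
    ((ContinuousLinearMap.proj i).comp A).hasFDerivAt.add (hQ.hasFDerivAt.mul_const (v i))
  simp [pd, hi.fderiv, mul_comm]

/-- If the matrix `M ∈ ℝ^{(n+1)×(n+1)}` has `M i (last) = 0` for all `i ≠ last`, then the
vector field `h(y) = Dφ(φ⁻¹(y))·M·φ⁻¹(y)` obtained from `ẋ = Mx` by the elementary change
of variables `φ(x) = (x₁, …, xₙ, x_{n+1} + g(x₁, …, xₙ))` satisfies the WDG condition. -/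
theorem wdg_of_linear_elementary {n : ℕ}
    (M : Matrix (Fin (n + 1)) (Fin (n + 1)) ℝ)
    (hM : ∀ i : Fin (n + 1), i ≠ Fin.last n → M i (Fin.last n) = 0)
    (g : MvPolynomial (Fin n) ℝ)
    (φ φinv : (Fin (n + 1) → ℝ) → (Fin (n + 1) → ℝ))
    (hφ : ∀ x, φ x = Function.update x (Fin.last n)
      (x (Fin.last n) + MvPolynomial.eval (fun i => x i.castSucc) g))
    (hφinv : ∀ y, φinv y = Function.update y (Fin.last n)
      (y (Fin.last n) - MvPolynomial.eval (fun i => y i.castSucc) g))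
    (h : (Fin (n + 1) → ℝ) → (Fin (n + 1) → ℝ))
    (hh : ∀ y, h y = fderiv ℝ φ (φinv y) (M.mulVec (φinv y))) :
    SatisfiesWDG h := by
  set p := Fin.last n
  set v : Fin (n + 1) → ℝ := Pi.single p 1
  set π : (Fin (n + 1) → ℝ) →L[ℝ] (Fin n → ℝ) := .pi fun i => .proj i.castSucc
  set P : (Fin n → ℝ) → ℝ := fun z => eval z g
  set A : (Fin (n + 1) → ℝ) →L[ℝ] (Fin (n + 1) → ℝ) :=
    LinearMap.toContinuousLinearMap M.mulVecLin
  set Q : (Fin (n + 1) → ℝ) → ℝ := fun y => fderiv ℝ P (π y) (π (A y)) - M p p * P (π y)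
  have hP : ContDiff ℝ 2 P := (AnalyticOnNhd.eval_mvPolynomial g).contDiff
  have hπv : π v = 0 := by ext k; simp [π, v, p, (Fin.castSucc_lt_last k).ne]
  have hA : ∀ y, A y = M *ᵥ y := fun _ => rfl
  have hAv : A v = M p p • v := by
    ext i; rcases eq_or_ne i p with rfl | hi <;> simp [A, v, mulVec_single, *]
  have hshear : φ = fun x => x + P (π x) • v := by
    ext x i; rcases eq_or_ne i p with rfl | hi <;> simp [P, π, v, *]
  have hshear_inv : ∀ y, φinv y = y - P (π y) • v := by
    intro y; ext i; rcases eq_or_ne i p with rfl | hi <;> simp [P, π, v, *]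
  have hh_eq : ∀ y i, h y i = A y i + Q y * v i := by
    intro y i
    rw [hh, hshear, hshear_inv, ← hA, fderiv_add_smul_comp_pushforward π P v hπv A _ hAv
      (hP.differentiable two_ne_zero _)]
    rfl
  have hQ : Differentiable ℝ Q :=
    (((hP.fderiv_right one_add_one_eq_two.le).differentiable one_ne_zero).comp π.differentiable
      |>.clm_apply (π.comp A).differentiable).sub
      (((hP.differentiable two_ne_zero).comp π.differentiable).const_mul _)
  have hQv : ∀ y (t : ℝ), Q (y + t • v) = Q y := by
    intro y t; simp [Q, hπv, hAv]
  refine satisfiesWDG_of_pd_eq_const_of_sink p M (fun i j hij => ?_) hM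
  ext x
  rw [show (fun y => h y i) = fun y => A y i + Q y * v i from funext (hh_eq · i),
    pd_clm_apply_add_mul A (hQ x)]
  rcases hij with hi | rfl
  · simp [A, v, hi]
  · rw [fderiv_apply_eq_zero_of_forall_add_smul (hQv x)]
    simp [A]
end

section
/- Let f : ℝ² → ℝ² be the smooth vector field f(z₁, z₂) = (√(1 + z₁²) · arsinh(z₂), √(1 + z₂²) · arsinh(z₁)), where arsinh denotes the inverse hyperbolic sine. Then the real vector space spanned by the iterated Lie derivatives {f, L_f f, L_f² f, L_f³ f, …} inside the space of smooth maps ℝ² → ℝ² is infinite-dimensional. -/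
open Matrix MvPolynomial

/-- The Lie derivative of a vector field `g` along a vector field `f`:
`(L_f g)_i = Σ_j (∂g_i/∂x_j) f_j`. -/
noncomputable def LieD {n : ℕ} (f g : (Fin n → ℝ) → (Fin n → ℝ)) :
    (Fin n → ℝ) → (Fin n → ℝ) :=
  fun x i => fderiv ℝ (fun x' => g x' i) x (f x)

/-- The vector field `f(z₁, z₂) = (√(1+z₁²)·arsinh z₂, √(1+z₂²)·arsinh z₁)`. -/
noncomputable def fEx : (Fin 2 → ℝ) → (Fin 2 → ℝ) := fun z =>
  ![Real.sqrt (1 + z 0 ^ 2) * Real.arsinh (z 1),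
    Real.sqrt (1 + z 1 ^ 2) * Real.arsinh (z 0)]

/-!
Along the diagonal curve `γ t = (sinh t, sinh t)` we have `f (γ t) = t • γ' t`, since
`arsinh (sinh t) = t` and `√(1 + sinh² t) = cosh t`. So `L_f` acts on restrictions to `γ` as the
Euler operator `t · d/dt`, and the restriction of `L_fᵏ f` is `(t · d/dt)ᵏ (t cosh t)`, which equals
`Pₖ(t) eᵗ + Qₖ(t) e⁻ᵗ` with `deg Pₖ = k + 1`. Such exponential polynomials determine their
polynomial coefficients, so these restrictions, and hence the iterates, are linearly independent.
-/

open Function Real Filter Topology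
open scoped ContDiff Polynomial

section LieDerivative

variable {n : ℕ} {f g : (Fin n → ℝ) → (Fin n → ℝ)}

theorem contDiff_lieD (hf : ContDiff ℝ ∞ f) (hg : ContDiff ℝ ∞ g) : ContDiff ℝ ∞ (LieD f g) :=
  contDiff_pi.2 fun i => ((contDiff_pi.1 hg i).fderiv_right (by simp)).clm_apply hf

theorem contDiff_iterate_lieD (hf : ContDiff ℝ ∞ f) (hg : ContDiff ℝ ∞ g) (k : ℕ) :
    ContDiff ℝ ∞ ((LieD f)^[k] g) := by
  induction k with
  | zero => exact hg
  | succ k ih => rw [iterate_succ_apply']; exact contDiff_lieD hf ih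

theorem lieD_apply_of_hasDerivAt {γ : ℝ → Fin n → ℝ} {v : Fin n → ℝ} {a t : ℝ} {i : Fin n}
    (hγ : HasDerivAt γ v t) (hfγ : f (γ t) = a • v)
    (hg : DifferentiableAt ℝ (fun x => g x i) (γ t)) :
    LieD f g (γ t) i = a * deriv (fun s => g (γ s) i) t := by
  have hcomp : HasDerivAt (fun s => g (γ s) i) (fderiv ℝ (fun x => g x i) (γ t) v) t :=
    hg.hasFDerivAt.comp_hasDerivAt t hγ
  rw [hcomp.deriv, LieD, hfγ, map_smul, smul_eq_mul]

theorem iterate_lieD_comp {γ : ℝ → Fin n → ℝ} {a : ℝ → ℝ} (hf : ContDiff ℝ ∞ f)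
    (hg : ContDiff ℝ ∞ g) (hγ : Differentiable ℝ γ) (hfγ : ∀ t, f (γ t) = a t • deriv γ t)
    (i : Fin n) (k : ℕ) :
    (fun t => (LieD f)^[k] g (γ t) i) = (fun h t => a t * deriv h t)^[k] (fun t => g (γ t) i) := by
  induction k with
  | zero => rfl
  | succ k ih =>
    rw [iterate_succ_apply', iterate_succ_apply', ← ih]
    ext t
    have hdiff := (contDiff_pi.1 (contDiff_iterate_lieD hf hg k) i).differentiable (by simp)
    exact lieD_apply_of_hasDerivAt (hγ t).hasDerivAt (hfγ t) (hdiff _)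

end LieDerivative

noncomputable def eulerOp (h : ℝ → ℝ) : ℝ → ℝ := fun t => t * deriv h t

namespace Polynomial

theorem linearIndependent_of_degree_injective {R ι : Type*} [CommRing R] [IsDomain R]
    {p : ι → R[X]} (hp : ∀ i, p i ≠ 0) (hdeg : Injective (degree ∘ p)) :
    LinearIndependent R p := by
  rw [linearIndependent_iff']
  intro s g hsum i hi
  by_contra hgi
  have hdeg_smul : ∀ j, g j ≠ 0 → degree (g j • p j) = degree (p j) := fun j hj => by
    rw [smul_eq_C_mul, degree_C_mul hj]
  have hpair : {j | j ∈ s ∧ g j • p j ≠ 0}.Pairwise (Ne on fun j => degree (g j • p j)) := by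
    rintro x ⟨-, hx⟩ y ⟨-, hy⟩ hxy
    simp only [onFun, hdeg_smul x (left_ne_zero_of_smul hx), hdeg_smul y (left_ne_zero_of_smul hy)]
    exact hdeg.ne hxy
  have hsup := degree_sum_eq_of_disjoint _ s hpair
  rw [hsum, degree_zero, eq_comm, Finset.sup_eq_bot_iff] at hsup
  exact hp i (degree_eq_bot.1 (hdeg_smul i hgi ▸ hsup i hi))

/-- `t · d/dt (P(t) e^{ct}) = (eulerPoly c P)(t) e^{ct}`. -/
noncomputable def eulerPoly (c : ℝ) (P : ℝ[X]) : ℝ[X] := X * (derivative P + C c * P)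

theorem degree_eulerPoly {c : ℝ} (hc : c ≠ 0) (P : ℝ[X]) :
    degree (eulerPoly c P) = degree P + 1 := by
  rcases eq_or_ne P 0 with rfl | hP
  · simp [eulerPoly]
  have hsum : degree (derivative P + C c * P) = degree P := by
    rw [degree_add_eq_right_of_degree_lt] <;> rw [degree_C_mul hc]
    exact degree_derivative_lt hP
  rw [eulerPoly, degree_mul, degree_X, hsum, add_comm]

theorem degree_iterate_eulerPoly {c : ℝ} (hc : c ≠ 0) (P : ℝ[X]) (k : ℕ) :
    degree ((eulerPoly c)^[k] P) = degree P + k := by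
  induction k with
  | zero => simp
  | succ k ih => rw [iterate_succ_apply', degree_eulerPoly hc, ih, Nat.cast_succ, add_assoc]

theorem hasDerivAt_eval_mul_exp (P : ℝ[X]) (c t : ℝ) :
    HasDerivAt (fun t => P.eval t * exp (c * t))
      ((derivative P + C c * P).eval t * exp (c * t)) t := by
  have hexp : HasDerivAt (fun t => exp (c * t)) (exp (c * t) * c) t := by
    simpa using ((hasDerivAt_id t).const_mul c).exp
  refine ((P.hasDerivAt t).mul hexp).congr_deriv ?_
  simp only [eval_add, eval_mul, eval_C]
  ring

noncomputable def expPolyComb : ℝ[X] × ℝ[X] →ₗ[ℝ] ℝ → ℝ where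
  toFun pq t := pq.1.eval t * exp t + pq.2.eval t * exp (-t)
  map_add' pq pq' := by ext t; simp only [Prod.fst_add, Prod.snd_add, eval_add, Pi.add_apply]; ring
  map_smul' a pq := by ext t; simp only [Prod.smul_fst, Prod.smul_snd, eval_smul, smul_eq_mul,
    RingHom.id_apply, Pi.smul_apply]; ring

theorem eulerOp_expPolyComb (pq : ℝ[X] × ℝ[X]) :
    eulerOp (expPolyComb pq) = expPolyComb (Prod.map (eulerPoly 1) (eulerPoly (-1)) pq) := by
  ext t
  have h₁ := hasDerivAt_eval_mul_exp pq.1 1 t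
  have h₂ := hasDerivAt_eval_mul_exp pq.2 (-1) t
  simp only [one_mul, neg_one_mul] at h₁ h₂
  simp only [eulerOp, expPolyComb, LinearMap.coe_mk, AddHom.coe_mk]
  rw [(h₁.fun_add h₂).deriv]
  simp only [eulerPoly, Prod.map_fst, Prod.map_snd, eval_mul, eval_X]
  ring

theorem iterate_eulerOp_expPolyComb (pq : ℝ[X] × ℝ[X]) (k : ℕ) :
    eulerOp^[k] (expPolyComb pq) =
      expPolyComb ((eulerPoly 1)^[k] pq.1, (eulerPoly (-1))^[k] pq.2) := by
  have hconj : Semiconj expPolyComb (Prod.map (eulerPoly 1) (eulerPoly (-1))) eulerOp :=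
    fun pq => (eulerOp_expPolyComb pq).symm
  rw [← hconj.iterate_right k pq, Prod.map_iterate]
  rfl

theorem ker_expPolyComb : LinearMap.ker expPolyComb = ⊥ := by
  rw [LinearMap.ker_eq_bot']
  rintro ⟨P, Q⟩ h
  have hval : ∀ t, P.eval t * exp t + Q.eval t * exp (-t) = 0 := fun t => congrFun h t
  -- `P(t) = -Q(t) e^{-2t}` tends to `0`, which forces the polynomial `P` to vanish
  have hP : P = 0 := by
    have hlim : Tendsto (fun t => -(Q.eval t / exp t * exp (-t))) atTop (𝓝 0) := by
      simpa using ((Q.tendsto_div_exp_atTop).mul tendsto_exp_neg_atTop_nhds_zero).neg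
    have hPeq : (fun t => P.eval t) = fun t => -(Q.eval t / exp t * exp (-t)) := by
      ext t
      have := hval t
      rw [exp_neg] at this ⊢
      field_simp at this ⊢
      linarith
    rw [← hPeq] at hlim
    exact leadingCoeff_eq_zero.1 ((tendsto_nhds_iff P).1 hlim).1
  have hQ : Q = 0 := Polynomial.funext fun t => by
    simpa [hP, exp_ne_zero] using hval t
  simp [hP, hQ]

end Polynomial

open Polynomial in
theorem linearIndependent_iterate_eulerOp_mul_cosh :
    LinearIndependent ℝ fun k => eulerOp^[k] (fun t => t * cosh t) := by
  set P₀ : ℝ[X] := Polynomial.C 2⁻¹ * Polynomial.X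
  have hP₀ : degree P₀ = 1 := by simp [P₀]
  have hstart : (fun t => t * cosh t) = expPolyComb (P₀, P₀) := by
    ext t
    simp only [cosh_eq, expPolyComb, LinearMap.coe_mk, AddHom.coe_mk,
      Polynomial.eval_mul, Polynomial.eval_C, Polynomial.eval_X, P₀]
    ring
  have hfirst : LinearIndependent ℝ fun k => (eulerPoly 1)^[k] P₀ := by
    refine linearIndependent_of_degree_injective (fun k => ?_) fun k l hkl => ?_
    · simp [← degree_eq_bot, degree_iterate_eulerPoly one_ne_zero, hP₀]
    · simp only [Function.comp_apply, degree_iterate_eulerPoly one_ne_zero, hP₀] at hkl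
      norm_cast at hkl
      omega
  have hpairs : LinearIndependent ℝ fun k => ((eulerPoly 1)^[k] P₀, (eulerPoly (-1))^[k] P₀) :=
    LinearIndependent.of_comp (LinearMap.fst ℝ _ _) hfirst
  simp only [hstart, iterate_eulerOp_expPolyComb]
  exact hpairs.map' expPolyComb ker_expPolyComb

noncomputable def diagSinh (t : ℝ) : Fin 2 → ℝ := fun _ => sinh t

theorem hasDerivAt_diagSinh (t : ℝ) : HasDerivAt diagSinh (fun _ => cosh t) t :=
  hasDerivAt_pi.2 fun _ => hasDerivAt_sinh t

theorem fEx_diagSinh (t : ℝ) : fEx (diagSinh t) = t • deriv diagSinh t := by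
  rw [(hasDerivAt_diagSinh t).deriv]
  ext i
  fin_cases i <;> simp [fEx, diagSinh, ← cosh_arsinh, mul_comm]

theorem contDiff_fEx : ContDiff ℝ ∞ fEx := by
  have hsqrt (j : Fin 2) : ContDiff ℝ ∞ fun z : Fin 2 → ℝ => √(1 + z j ^ 2) :=
    (contDiff_const.add ((contDiff_apply ℝ ℝ j).pow 2)).sqrt fun z => by positivity
  have harsinh (j : Fin 2) : ContDiff ℝ ∞ fun z : Fin 2 → ℝ => arsinh (z j) :=
    contDiff_arsinh.comp (contDiff_apply ℝ ℝ j)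
  refine contDiff_pi.2 fun i => ?_
  fin_cases i
  · simpa [fEx] using (hsqrt 0).mul (harsinh 1)
  · simpa [fEx] using (hsqrt 1).mul (harsinh 0)

noncomputable def restrictDiag : ((Fin 2 → ℝ) → Fin 2 → ℝ) →ₗ[ℝ] ℝ → ℝ :=
  (LinearMap.proj 0 : (Fin 2 → ℝ) →ₗ[ℝ] ℝ).compLeft ℝ ∘ₗ LinearMap.funLeft ℝ (Fin 2 → ℝ) diagSinh

theorem restrictDiag_iterate_lieD_fEx (k : ℕ) :
    restrictDiag ((LieD fEx)^[k] fEx) = eulerOp^[k] (fun t => t * cosh t) := by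
  have hstart : (fun t => fEx (diagSinh t) 0) = fun t => t * cosh t := by
    ext t
    simp [fEx_diagSinh, (hasDerivAt_diagSinh t).deriv]
  rw [← hstart]
  exact iterate_lieD_comp contDiff_fEx contDiff_fEx
    (fun t => (hasDerivAt_diagSinh t).differentiableAt) fEx_diagSinh 0 k

/-- For the vector field `f(z₁, z₂) = (√(1+z₁²)·arsinh z₂, √(1+z₂²)·arsinh z₁)`, the span
of the iterated Lie derivatives `{f, L_f f, L_f² f, …}` is infinite-dimensional. -/
theorem span_lieD_fEx_infiniteDimensional :
    ¬ FiniteDimensional ℝ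
        (Submodule.span ℝ (Set.range fun k : ℕ => (LieD fEx)^[k] fEx)) := by
  have hli : LinearIndependent ℝ fun k : ℕ => (LieD fEx)^[k] fEx := by
    refine LinearIndependent.of_comp restrictDiag ?_
    simpa only [Function.comp_def, restrictDiag_iterate_lieD_fEx]
      using linearIndependent_iterate_eulerOp_mul_cosh
  intro hfin
  exact Module.Finite.not_linearIndependent_of_infinite _ (linearIndependent_span hli)
end

section
/- The polynomial vector field h : ℝ² → ℝ² given by h(y₁, y₂) = (y₂ + y₁², −2y₁(y₂ + y₁²)) is super-linearizable, but it does not satisfy the WDG condition (in particular, ∂h₁/∂y₁ = 2y₁ is a nonconstant weight on a cycle of its weighted dependency graph). -/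
open Matrix MvPolynomial

/-!
Along solutions of `h` the quantity `u = y₂ + y₁²` is conserved, so every solution is the
polynomial curve `y₁(t) = y₁(0) + u t`, `y₂(t) = y₂(0) - 2 y₁(0) u t - u² t²`. The lifted
coordinates `(y₁, y₂, y₁ u, u², u)` obey a linear system with a nilpotent matrix, whose exponential
is a quadratic polynomial in `t` reproducing that curve. The WDG condition already fails on the
one-edge cycle at `y₁`.
-/

open Set

theorem NormedSpace.exp_eq_sum_of_pow_eq_zero {𝕂 𝔸 : Type*} [Field 𝕂] [CharZero 𝕂] [Ring 𝔸]
    [Algebra 𝕂 𝔸] [TopologicalSpace 𝔸] [IsTopologicalRing 𝔸] [T2Space 𝔸]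
    {x : 𝔸} {k : ℕ} (hx : x ^ k = 0) :
    NormedSpace.exp x = ∑ n ∈ Finset.range k, (n.factorial⁻¹ : 𝕂) • x ^ n := by
  rw [NormedSpace.exp_eq_tsum 𝕂]
  exact tsum_eq_sum fun n hn => by
    rw [pow_eq_zero_of_le (by simpa using hn) hx, smul_zero]

theorem Matrix.exp_smul_mulVec_of_pow_three_eq_zero {ι : Type*} [Fintype ι] [DecidableEq ι]
    {A : Matrix ι ι ℝ} (hA : A ^ 3 = 0) (t : ℝ) (v : ι → ℝ) :
    NormedSpace.exp (t • A) *ᵥ v = v + t • (A *ᵥ v) + (t ^ 2 / 2) • (A *ᵥ (A *ᵥ v)) := by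
  rw [NormedSpace.exp_eq_sum_of_pow_eq_zero (𝕂 := ℝ) (by rw [smul_pow, hA, smul_zero])]
  simp [Finset.sum_range_succ, Matrix.add_mulVec, Matrix.smul_mulVec, smul_pow, pow_two,
    Matrix.mulVec_mulVec, smul_smul, div_eq_inv_mul]

theorem eqOn_Ici_of_hasDerivAt_eq {E : Type*} [NormedAddCommGroup E] [NormedSpace ℝ E]
    {f g f' : ℝ → E} {a : ℝ} (hf : ∀ s, a ≤ s → HasDerivAt f (f' s) s)
    (hg : ∀ s, a ≤ s → HasDerivAt g (f' s) s) (ha : f a = g a) : EqOn f g (Ici a) :=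
  fun t ht => eq_of_has_deriv_right_eq (fun s hs => (hf s hs.1).hasDerivWithinAt)
    (fun s hs => (hg s hs.1).hasDerivWithinAt)
    (fun s hs => (hf s hs.1).continuousAt.continuousWithinAt)
    (fun s hs => (hg s hs.1).continuousAt.continuousWithinAt) ha t ⟨ht, le_rfl⟩

theorem SatisfiesWDG.exists_pd_self_eq_const {n : ℕ} {h : (Fin n → ℝ) → (Fin n → ℝ)}
    (hW : SatisfiesWDG h) (i : Fin n) (hi : pd (fun x => h x i) i ≠ 0) :
    ∃ r : ℝ, ∀ x, pd (fun x => h x i) i x = r := by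
  simpa using hW 1 le_rfl (fun _ => i) rfl (by simpa using hi)

namespace WDGCounterexample

def firstIntegral (y : Fin 2 → ℝ) : ℝ := y 1 + y 0 ^ 2

def vectorField (y : Fin 2 → ℝ) : Fin 2 → ℝ :=
  ![firstIntegral y, -2 * y 0 * firstIntegral y]

theorem pd_vectorField_zero_zero (y : Fin 2 → ℝ) :
    pd (fun y' => vectorField y' 0) 0 y = 2 * y 0 := by
  change pd (fun y => y 1 + y 0 ^ 2) 0 y = _
  rw [pd, fderiv_fun_add (by fun_prop) (by fun_prop), fderiv_fun_pow _ (by fun_prop),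
    (hasFDerivAt_apply 1 y).fderiv, (hasFDerivAt_apply 0 y).fderiv]
  simp

theorem not_satisfiesWDG_vectorField : ¬ SatisfiesWDG vectorField := by
  intro hW
  have hne : pd (fun y => vectorField y 0) 0 ≠ 0 := fun h0 => by
    simpa [pd_vectorField_zero_zero] using congrFun h0 1
  obtain ⟨r, hr⟩ := hW.exists_pd_self_eq_const 0 hne
  simpa [pd_vectorField_zero_zero] using (hr 0).trans (hr 1).symm

def flow (t : ℝ) (y : Fin 2 → ℝ) : Fin 2 → ℝ :=
  ![y 0 + firstIntegral y * t, y 1 - 2 * y 0 * firstIntegral y * t - firstIntegral y ^ 2 * t ^ 2]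

section Solution

variable {x : ℝ → Fin 2 → ℝ}

theorem firstIntegral_eq_of_hasDerivAt
    (hx : ∀ t, 0 ≤ t → HasDerivAt x (vectorField (x t)) t) {t : ℝ} (ht : 0 ≤ t) :
    firstIntegral (x t) = firstIntegral (x 0) := by
  have hderiv : ∀ s, 0 ≤ s → HasDerivAt (fun r => firstIntegral (x r)) 0 s := fun s hs => by
    have hy₀ := hasDerivAt_pi.1 (hx s hs) 0
    have hy₁ := hasDerivAt_pi.1 (hx s hs) 1
    refine (hy₁.fun_add (hy₀.fun_pow 2)).congr_deriv ?_
    simp [vectorField]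
  exact eqOn_Ici_of_hasDerivAt_eq hderiv (fun s _ => hasDerivAt_const s _) rfl ht

theorem eq_flow_of_hasDerivAt
    (hx : ∀ t, 0 ≤ t → HasDerivAt x (vectorField (x t)) t) {t : ℝ} (ht : 0 ≤ t) :
    x t = flow t (x 0) := by
  set c := firstIntegral (x 0)
  have hc : ∀ s, 0 ≤ s → firstIntegral (x s) = c := fun s hs =>
    firstIntegral_eq_of_hasDerivAt hx hs
  have hy₀ : EqOn (fun s => x s 0) (fun s => x 0 0 + c * s) (Ici 0) := by
    refine eqOn_Ici_of_hasDerivAt_eq (f' := fun _ => c) (fun s hs => ?_) (fun s _ => ?_) (by simp)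
    · simpa [vectorField, hc s hs] using hasDerivAt_pi.1 (hx s hs) 0
    · simpa using ((hasDerivAt_id s).const_mul c).const_add (x 0 0)
  have hy₁ : EqOn (fun s => x s 1) (fun s => x 0 1 - 2 * x 0 0 * c * s - c ^ 2 * s ^ 2)
      (Ici 0) := by
    refine eqOn_Ici_of_hasDerivAt_eq (f' := fun s => -2 * (x 0 0 + c * s) * c)
      (fun s hs => ?_) (fun s _ => ?_) (by simp)
    · simpa [vectorField, hc s hs, ← hy₀ hs] using hasDerivAt_pi.1 (hx s hs) 1
    · refine ((((hasDerivAt_id s).const_mul (2 * x 0 0 * c)).const_sub (x 0 1)).fun_sub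
        ((hasDerivAt_pow 2 s).const_mul (c ^ 2))).congr_deriv ?_
      ring
  funext i
  fin_cases i
  exacts [hy₀ ht, hy₁ ht]

end Solution

def liftMap (y : Fin 2 → ℝ) : Fin 3 → ℝ :=
  ![y 0 * firstIntegral y, firstIntegral y ^ 2, firstIntegral y]

theorem isPolyMap_liftMap : IsPolyMap liftMap :=
  ⟨![X 0 * (X 1 + X 0 ^ 2), (X 1 + X 0 ^ 2) ^ 2, X 1 + X 0 ^ 2], fun y i => by
    fin_cases i <;> simp [liftMap, firstIntegral]⟩

-- With `u = y₂ + y₁²` constant: `y₁' = u`, `y₂' = -2 (y₁ u)`, `(y₁ u)' = u²`, `(u²)' = u' = 0`.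
def liftMatrix : Matrix (Fin 5) (Fin 5) ℝ :=
  !![0, 0, 0, 0, 1; 0, 0, -2, 0, 0; 0, 0, 0, 1, 0; 0, 0, 0, 0, 0; 0, 0, 0, 0, 0]

theorem liftMatrix_pow_three : liftMatrix ^ 3 = 0 := by
  ext i j
  fin_cases i <;> fin_cases j <;> simp [liftMatrix, pow_succ, Matrix.mul_apply, Fin.sum_univ_five]

theorem liftMatrix_mulVec (v : Fin 5 → ℝ) : liftMatrix *ᵥ v = ![v 4, -2 * v 2, v 3, 0, 0] := by
  simp [liftMatrix, Matrix.vecHead, Matrix.vecTail]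

theorem exp_smul_liftMatrix_mulVec_append (t : ℝ) (y : Fin 2 → ℝ) (i : Fin 2) :
    (NormedSpace.exp (t • liftMatrix) *ᵥ Fin.append y (liftMap y)) (Fin.castAdd 3 i) =
      flow t y i := by
  have hv : Fin.append y (liftMap y) =
      ![y 0, y 1, y 0 * firstIntegral y, firstIntegral y ^ 2, firstIntegral y] := by
    ext j
    fin_cases j <;> rfl
  rw [hv, Matrix.exp_smul_mulVec_of_pow_three_eq_zero liftMatrix_pow_three, liftMatrix_mulVec,
    liftMatrix_mulVec]
  fin_cases i <;> simp [flow] <;> ring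

end WDGCounterexample

/-- The vector field `h(y₁, y₂) = (y₂ + y₁², −2y₁(y₂ + y₁²))` is super-linearizable but does
not satisfy the WDG condition; in particular `∂h₁/∂y₁ = 2y₁` is a nonconstant weight on a
cycle of its weighted dependency graph. -/
theorem counterexample_wdg (h : (Fin 2 → ℝ) → (Fin 2 → ℝ))
    (hh : ∀ y : Fin 2 → ℝ,
      h y = ![y 1 + y 0 ^ 2, -2 * y 0 * (y 1 + y 0 ^ 2)]) :
    IsSuperLinearizable h ∧ ¬ SatisfiesWDG h ∧
      ∀ y : Fin 2 → ℝ, pd (fun y' => h y' 0) 0 y = 2 * y 0 := by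
  open WDGCounterexample in
  obtain rfl : h = vectorField := funext hh
  refine ⟨⟨3, liftMatrix, liftMap, isPolyMap_liftMap, ?_⟩, not_satisfiesWDG_vectorField,
    pd_vectorField_zero_zero⟩
  rintro _ x rfl hx t ht i
  rw [exp_smul_liftMatrix_mulVec_append, eq_flow_of_hasDerivAt hx ht]
end
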